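/- Let ε_k = f(x̂^{N_k}, y*) − f(x*, ŷ^{N_k}) satisfy ε_k ≤ C R_{k−1}/√(N_k) where R_{k−1} = ‖z^{N_{k−1}} − z*‖ and the r-growth condition (μ_r/2) ‖z − z*‖^r ≤ f(x, y*) − f(x*, y) holds for r ≥ 2. If at each restart stage N_k is chosen so that R_k ≤ R_{k−1}/2, i.e., N_k = ⌈(2C/(μ_r R_k^{r−1}))²⌉ = ⌈(2^r C/(μ_r R_{k−1}^{r−1}))²⌉, then after k = ⌈log₂((μ_r R_0^r)/(2ε))/r⌉ restarts the total number of iterations satisfies N_1 + ⋯ + N_k = O(2^{2k(r−1)} C² / (μ_r² R_0^{2(r−1)})) = O(C² / (μ_r^{2/r} ε^{2(r−1)/r})) and the final error is at most ε. -/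

import Mathlib

open Finset

lemma geom_aux (b : ℝ) (hb : 4 ≤ b) : ∀ K : ℕ, ∑ i ∈ Finset.range K, b ^ i ≤ b ^ K / 3 := by
  intro K
  induction K with
  | zero => simp
  | succ n ih =>
    rw [Finset.sum_range_succ, pow_succ]
    have hbn : (0:ℝ) ≤ b ^ n := pow_nonneg (by linarith) n
    nlinarith [mul_nonneg (show (0:ℝ) ≤ b - 4 by linarith) hbn]

lemma rpow_sq (x : ℝ) (hx : 0 < x) (y : ℝ) : (x ^ y) ^ 2 = x ^ (2*y) := by
  rw [pow_two, ← Real.rpow_add hx, two_mul]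

/-- Restart technique: with rate `ε_k ≤ C R_{k-1} / √N_k`, `r`-growth with `r ≥ 2`, distances
halved at each restart (`R_k = R_0 / 2^k`), stage lengths
`N_k = ⌈(2^r C / (μ_r R_{k-1}^{r-1}))²⌉`, and `K = ⌈log₂(μ_r R_0^r / (2ε)) / r⌉` restarts,
the final error (bounded via the growth condition by `μ_r R_K^r / 2`) is at most `ε` and
`N_1 + ⋯ + N_K = O(2^{2K(r-1)} C² / (μ_r² R_0^{2(r-1)})) = O(C² / (μ_r^{2/r} ε^{2(r-1)/r}))`. -/
theorem stmt11 (r : ℝ) (hr : 2 ≤ r) :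
    ∃ c₁ c₂ : ℝ, 0 < c₁ ∧ 0 < c₂ ∧
      ∀ (μr C R0 ε : ℝ), 0 < μr → 0 < C → 0 < R0 → 0 < ε →
        ε ≤ μr * R0 ^ r / 2 →
        1 ≤ 2 ^ r * C / (μr * R0 ^ (r - 1)) →
        ∀ (R : ℕ → ℝ) (N : ℕ → ℕ) (K : ℕ),
          (∀ k, R k = R0 / 2 ^ k) →
          (∀ k, 1 ≤ k → N k = ⌈(2 ^ r * C / (μr * R (k - 1) ^ (r - 1))) ^ 2⌉₊) →
          K = ⌈Real.logb 2 (μr * R0 ^ r / (2 * ε)) / r⌉₊ →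
          μr / 2 * R K ^ r ≤ ε ∧
          (∑ j ∈ Finset.Icc 1 K, (N j : ℝ))
              ≤ c₁ * 2 ^ (2 * (K : ℝ) * (r - 1)) * C ^ 2 / (μr ^ 2 * R0 ^ (2 * (r - 1))) ∧
          c₁ * 2 ^ (2 * (K : ℝ) * (r - 1)) * C ^ 2 / (μr ^ 2 * R0 ^ (2 * (r - 1)))
              ≤ c₂ * C ^ 2 / (μr ^ (2 / r) * ε ^ (2 * (r - 1) / r)) := by
  have hr0 : (0:ℝ) < r := by linarith
  refine ⟨2 * 2 ^ (2*r), (2 * 2 ^ (2*r)) * 2 ^ (2*r), by positivity, by positivity, ?_⟩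
  intro μr C R0 ε hμ hC hR0 hε hεle h1 R N K hR hN hK
  set L := Real.logb 2 (μr * R0 ^ r / (2 * ε)) with hLdef
  have hA1 : (1:ℝ) ≤ μr * R0 ^ r / (2*ε) := by
    rw [le_div_iff₀ (by positivity)]
    linarith
  have hApos : (0:ℝ) < μr * R0 ^ r / (2*ε) := by positivity
  have hL0 : 0 ≤ L := Real.logb_nonneg one_lt_two hA1
  have hKge : L / r ≤ (K:ℝ) := by rw [hK]; exact Nat.le_ceil _
  have hKle : (K:ℝ) ≤ L / r + 1 := by
    rw [hK]
    have := Nat.ceil_lt_add_one (show (0:ℝ) ≤ L / r by positivity)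
    linarith
  have h2L : (2:ℝ) ^ L = μr * R0 ^ r / (2*ε) :=
    Real.rpow_logb (by norm_num) (by norm_num) hApos
  -- Goal 1
  have hRK : R K ^ r = R0 ^ r / 2 ^ ((K:ℝ)*r) := by
    rw [hR K, Real.div_rpow hR0.le (by positivity), ← Real.rpow_natCast (2:ℝ) K,
      ← Real.rpow_mul (by norm_num)]
  have goal1 : μr / 2 * R K ^ r ≤ ε := by
    have hKL : L ≤ (K:ℝ) * r := (div_le_iff₀ hr0).mp hKge
    have h2K : μr * R0 ^ r / (2*ε) ≤ 2 ^ ((K:ℝ)*r) :=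
      h2L ▸ Real.rpow_le_rpow_of_exponent_le one_le_two hKL
    have hP : (0:ℝ) < 2 ^ ((K:ℝ)*r) := by positivity
    have h3 : μr * R0 ^ r ≤ 2 ^ ((K:ℝ)*r) * (2*ε) := (div_le_iff₀ (by positivity)).mp h2K
    rw [hRK, show μr / 2 * (R0 ^ r / 2 ^ ((K:ℝ)*r)) = μr * R0 ^ r / (2 * 2 ^ ((K:ℝ)*r)) by
      ring, div_le_iff₀ (by positivity)]
    linarith [h3]
  refine ⟨goal1, ?_, ?_⟩
  -- notation for goal 2
  · set D := C ^ 2 / (μr ^ 2 * R0 ^ (2*(r-1))) with hD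
    have hDpos : 0 < D := by positivity
    set b := (2:ℝ) ^ (2*(r-1)) with hb
    have hbpos : 0 < b := by positivity
    have hb4 : 4 ≤ b := by
      have h22 : (2:ℝ) ^ (2:ℝ) = 4 := by
        have := Real.rpow_natCast (2:ℝ) 2
        norm_num at this
        linarith
      calc (4:ℝ) = 2 ^ (2:ℝ) := h22.symm
        _ ≤ b := Real.rpow_le_rpow_of_exponent_le one_le_two (by linarith)
    have hb1 : 1 ≤ b := by linarith
    have h1D : 1 ≤ 2 ^ (2*r) * D := by
      have hsq := mul_le_mul h1 h1 (by norm_num) (le_trans (by norm_num) h1)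
      have he1 : ((2:ℝ) ^ r * C / (μr * R0 ^ (r-1))) * (2 ^ r * C / (μr * R0 ^ (r-1)))
          = 2 ^ (2*r) * D := by
        rw [hD, show ((2:ℝ) ^ r * C / (μr * R0 ^ (r-1))) * (2 ^ r * C / (μr * R0 ^ (r-1)))
            = ((2:ℝ)^r)^2 * C^2 / (μr^2 * (R0 ^ (r-1))^2) by ring,
          rpow_sq 2 (by norm_num), rpow_sq R0 hR0]
        ring
      rw [← he1]
      simpa using hsq
    have key : ∀ j : ℕ, 1 ≤ j → ((N j : ℝ)) ≤ 2 * (2 ^ (2*r) * D) * b ^ (j-1) := by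
      intro j hj
      set p : ℝ := ((j - 1 : ℕ) : ℝ) with hp
      have hbp : b ^ (j-1) = (2:ℝ) ^ (2*(r-1)*p) := by
        rw [← Real.rpow_natCast b (j-1), ← hp, hb, ← Real.rpow_mul (by norm_num)]
      have hRj : R (j-1) ^ (r-1) = R0 ^ (r-1) / 2 ^ (p*(r-1)) := by
        rw [hR (j-1), Real.div_rpow hR0.le (by positivity),
          ← Real.rpow_natCast (2:ℝ) (j-1), ← hp, ← Real.rpow_mul (by norm_num)]
      have ht2 : ((2:ℝ) ^ r * C / (μr * R (j-1) ^ (r-1))) ^ 2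
          = (2 ^ (2*r) * D) * b ^ (j-1) := by
        rw [hRj, hbp, hD]
        have e1 : ((2:ℝ)^r)^2 = 2 ^ (2*r) := rpow_sq 2 (by norm_num) r
        have e2 : (R0 ^ (r-1))^2 = R0 ^ (2*(r-1)) := rpow_sq R0 hR0 (r-1)
        have e3 : ((2:ℝ) ^ (p*(r-1)))^2 = 2 ^ (2*(r-1)*p) := by
          rw [rpow_sq 2 (by norm_num) (p*(r-1))]
          ring_nf
        have hpden : (0:ℝ) < μr * (R0 ^ (r-1) / 2 ^ (p*(r-1))) := by positivity
        rw [div_pow, mul_pow, mul_pow, div_pow, e1, e2, e3]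
        have h2p : (0:ℝ) < (2:ℝ) ^ (p*(r-1)) := by positivity
        have hR0p : (0:ℝ) < R0 ^ (r-1) := by positivity
        have hR0p2 : (0:ℝ) < R0 ^ (2*(r-1)) := by positivity
        field_simp
      have hNj : (N j : ℝ) = (⌈((2:ℝ) ^ r * C / (μr * R (j-1) ^ (r-1))) ^ 2⌉₊ : ℝ) := by
        rw [hN j hj]
      have hceil : ((⌈((2:ℝ) ^ r * C / (μr * R (j-1) ^ (r-1))) ^ 2⌉₊ : ℕ) : ℝ)
          ≤ ((2:ℝ) ^ r * C / (μr * R (j-1) ^ (r-1))) ^ 2 + 1 := by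
        have := Nat.ceil_lt_add_one (show (0:ℝ) ≤ ((2:ℝ) ^ r * C / (μr * R (j-1) ^ (r-1))) ^ 2
          by positivity)
        linarith
      have hbj1 : (1:ℝ) ≤ b ^ (j-1) := by
        calc (1:ℝ) = 1 ^ (j-1) := (one_pow _).symm
          _ ≤ b ^ (j-1) := pow_le_pow_left₀ (by norm_num) hb1 _
      have h1' : (1:ℝ) ≤ (2 ^ (2*r) * D) * b ^ (j-1) := by
        calc (1:ℝ) ≤ 2 ^ (2*r) * D := h1D
          _ = (2 ^ (2*r) * D) * 1 := by ring
          _ ≤ (2 ^ (2*r) * D) * b ^ (j-1) := by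
            apply mul_le_mul_of_nonneg_left hbj1 (by positivity)
      rw [hNj]
      calc ((⌈((2:ℝ) ^ r * C / (μr * R (j-1) ^ (r-1))) ^ 2⌉₊ : ℕ) : ℝ)
          ≤ ((2:ℝ) ^ r * C / (μr * R (j-1) ^ (r-1))) ^ 2 + 1 := hceil
        _ = (2 ^ (2*r) * D) * b ^ (j-1) + 1 := by rw [ht2]
        _ ≤ (2 ^ (2*r) * D) * b ^ (j-1) + (2 ^ (2*r) * D) * b ^ (j-1) := by linarith
        _ = 2 * (2 ^ (2*r) * D) * b ^ (j-1) := by ring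
    have hsum1 : (∑ j ∈ Finset.Icc 1 K, (N j : ℝ))
        ≤ ∑ j ∈ Finset.Icc 1 K, 2 * (2 ^ (2*r) * D) * b ^ (j-1) := by
      apply Finset.sum_le_sum
      intro j hj
      exact key j (Finset.mem_Icc.mp hj).1
    have hsum2 : ∑ j ∈ Finset.Icc 1 K, 2 * (2 ^ (2*r) * D) * b ^ (j-1)
        = 2 * (2 ^ (2*r) * D) * ∑ i ∈ Finset.range K, b ^ i := by
      rw [← Finset.mul_sum]
      congr 1
      rw [← Finset.Ico_add_one_right_eq_Icc, Finset.sum_Ico_eq_sum_range]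
      simp
    have hsum3 : ∑ i ∈ Finset.range K, b ^ i ≤ b ^ K / 3 := geom_aux b hb4 K
    have hbK : (b:ℝ) ^ K = (2:ℝ) ^ (2*(K:ℝ)*(r-1)) := by
      rw [← Real.rpow_natCast b K, hb, ← Real.rpow_mul (by norm_num)]
      ring_nf
    have : (∑ j ∈ Finset.Icc 1 K, (N j : ℝ)) ≤ 2 * (2 ^ (2*r) * D) * (b ^ K / 3) := by
      calc (∑ j ∈ Finset.Icc 1 K, (N j : ℝ))
          ≤ 2 * (2 ^ (2*r) * D) * ∑ i ∈ Finset.range K, b ^ i := by rw [← hsum2]; exact hsum1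
        _ ≤ 2 * (2 ^ (2*r) * D) * (b ^ K / 3) := by
            apply mul_le_mul_of_nonneg_left hsum3 (by positivity)
    have hfin : 2 * (2 ^ (2*r) * D) * (b ^ K / 3)
        ≤ 2 * 2 ^ (2*r) * 2 ^ (2*(K:ℝ)*(r-1)) * C ^ 2 / (μr ^ 2 * R0 ^ (2*(r-1))) := by
      rw [← hbK, hD]
      have hbKpos : (0:ℝ) < b ^ K := by positivity
      rw [show 2 * 2 ^ (2*r) * b ^ K * C ^ 2 / (μr ^ 2 * R0 ^ (2*(r-1)))
          = 2 * (2 ^ (2*r) * (C ^ 2 / (μr ^ 2 * R0 ^ (2*(r-1))))) * b ^ K by ring]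
      have h0 : (0:ℝ) ≤ 2 * (2 ^ (2*r) * (C ^ 2 / (μr ^ 2 * R0 ^ (2*(r-1))))) * b ^ K := by
        positivity
      linarith
    linarith
  -- Goal 3
  · set s : ℝ := 2*(r-1)/r with hs
    have hs0 : 0 ≤ s := div_nonneg (by linarith) (by linarith)
    have hrs : r * s = 2*(r-1) := by
      rw [hs]; field_simp
    have hKexp : 2*(K:ℝ)*(r-1) ≤ L*s + 2*(r-1) := by
      have h := mul_le_mul_of_nonneg_left hKle (show (0:ℝ) ≤ 2*(r-1) by linarith)
      have heq : 2*(r-1) * (L/r + 1) = L*s + 2*(r-1) := by rw [hs]; field_simp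
      nlinarith [h]
    have h2exp : (2:ℝ) ^ (2*(K:ℝ)*(r-1)) ≤ 2 ^ (L*s + 2*(r-1)) :=
      Real.rpow_le_rpow_of_exponent_le one_le_two hKexp
    have hsplit : (2:ℝ) ^ (L*s + 2*(r-1)) = (μr * R0 ^ r / (2*ε)) ^ s * 2 ^ (2*(r-1)) := by
      rw [Real.rpow_add (by norm_num), Real.rpow_mul (by norm_num), h2L]
    have hAs : (μr * R0 ^ r / (2*ε)) ^ s ≤ μr ^ s * R0 ^ (2*(r-1)) / ε ^ s := by
      have e1 : (μr * R0 ^ r / (2*ε)) ^ s = μr ^ s * R0 ^ (2*(r-1)) / (2*ε) ^ s := by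
        rw [Real.div_rpow (by positivity) (by positivity),
          Real.mul_rpow hμ.le (by positivity), ← Real.rpow_mul hR0.le, hrs]
      rw [e1]
      gcongr <;> linarith
    have hchain : (2:ℝ) ^ (2*(K:ℝ)*(r-1)) ≤ (μr ^ s * R0 ^ (2*(r-1)) / ε ^ s) * 2 ^ (2*(r-1)) := by
      calc (2:ℝ) ^ (2*(K:ℝ)*(r-1)) ≤ 2 ^ (L*s + 2*(r-1)) := h2exp
        _ = (μr * R0 ^ r / (2*ε)) ^ s * 2 ^ (2*(r-1)) := hsplit
        _ ≤ (μr ^ s * R0 ^ (2*(r-1)) / ε ^ s) * 2 ^ (2*(r-1)) := by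
            apply mul_le_mul_of_nonneg_right hAs (by positivity)
    have hμ2 : μr ^ 2 = μr ^ s * μr ^ (2/r) := by
      rw [← Real.rpow_natCast μr 2, ← Real.rpow_add hμ]
      congr 1
      push_cast
      rw [hs]
      field_simp
      ring
    have hεs : (0:ℝ) < ε ^ s := Real.rpow_pos_of_pos hε s
    have hμs : (0:ℝ) < μr ^ s := Real.rpow_pos_of_pos hμ s
    have hμ2r : (0:ℝ) < μr ^ (2/r) := Real.rpow_pos_of_pos hμ (2/r)
    have hR02 : (0:ℝ) < R0 ^ (2*(r-1)) := Real.rpow_pos_of_pos hR0 _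
    have heq2 : 2*2^(2*r) * ((μr ^ s * R0 ^ (2*(r-1)) / ε ^ s) * 2 ^ (2*(r-1))) * C ^ 2
          / (μr ^ 2 * R0 ^ (2*(r-1)))
        = 2*2^(2*r) * 2 ^ (2*(r-1)) * C ^ 2 / (μr ^ (2/r) * ε ^ s) := by
      rw [hμ2]
      field_simp
    have h2r2r : (2:ℝ) ^ (2*(r-1)) ≤ 2 ^ (2*r) :=
      Real.rpow_le_rpow_of_exponent_le one_le_two (by linarith)
    calc 2*2^(2*r) * 2 ^ (2*(K:ℝ)*(r-1)) * C ^ 2 / (μr ^ 2 * R0 ^ (2*(r-1)))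
        ≤ 2*2^(2*r) * ((μr ^ s * R0 ^ (2*(r-1)) / ε ^ s) * 2 ^ (2*(r-1))) * C ^ 2
            / (μr ^ 2 * R0 ^ (2*(r-1))) := by
            gcongr
      _ = 2*2^(2*r) * 2 ^ (2*(r-1)) * C ^ 2 / (μr ^ (2/r) * ε ^ s) := heq2
      _ ≤ 2*2^(2*r) * 2^(2*r) * C ^ 2 / (μr ^ (2/r) * ε ^ s) := by
          gcongr
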